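/- arXiv:2602.14103 — 5 statements merged into one kernel-verified Lean document; each statement's English description precedes it below -/
import Mathlib

section
/- The map f defined on s-adic codes by f((αₙ)) = Σ_{n≥1} βₙ 2^{-n}, where β₁ = 0 if α₁ ∈ A₀ and β₁ = 1 if α₁ ∈ A₁, and β_{n+1} = βₙ if α_{n+1} = αₙ, β_{n+1} = 1−βₙ otherwise, is well defined on [0,1]: the two s-adic representations of any s-adic rational give the same value. -/
open Set Filter

/-- Value of an `s`-adic code `α`: `∑ αₙ / sⁿ⁺¹`. -/
noncomputable def sval (s : ℕ) (α : ℕ → ℕ) : ℝ := ∑' n, (α n : ℝ) / (s : ℝ) ^ (n + 1)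

/-- `α` is a sequence of digits in `{0, …, s−1}`. -/
def isDigits (s : ℕ) (α : ℕ → ℕ) : Prop := ∀ n, α n < s

/-- The `s`-adic cylinder of rank `m` with base `c₀ … c_{m−1}`. -/
def cylinder (s m : ℕ) (c : ℕ → ℕ) : Set ℝ :=
  {x | ∃ α : ℕ → ℕ, isDigits s α ∧ (∀ i < m, α i = c i) ∧ x = sval s α}

/-- The sequence of output binary digits `βₙ`. -/
def betaSeq (A1 : Finset ℕ) (α : ℕ → ℕ) : ℕ → ℕ
  | 0 => if α 0 ∈ A1 then 1 else 0
  | n + 1 => if α (n + 1) = α n then betaSeq A1 α n else 1 - betaSeq A1 α n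

lemma geom_aux (S : ℝ) (hS : 1 < S) (c : ℝ) (m : ℕ) :
    ∑' n : ℕ, c / S ^ (n + m + 1) = c / ((S - 1) * S ^ m) := by
  have h0 : (0:ℝ) < S := one_pos.trans hS
  have hne : S ≠ 0 := ne_of_gt h0
  have habs : ‖S⁻¹‖ < 1 := by
    rw [Real.norm_eq_abs, abs_of_pos (inv_pos.2 h0)]
    exact inv_lt_one_of_one_lt₀ hS
  have h1 : ∀ n : ℕ, c / S ^ (n + m + 1) = (c / S ^ (m+1)) * S⁻¹ ^ n := by
    intro n
    rw [pow_add, pow_add, inv_pow]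
    field_simp
    try ring
    try exact Or.inl trivial
  rw [tsum_congr h1, tsum_mul_left, tsum_geometric_of_norm_lt_one habs]
  have h2 : S - 1 ≠ 0 := sub_ne_zero.2 (ne_of_gt hS)
  field_simp
  ring

lemma summable_aux (S : ℝ) (hS : 1 < S) (f : ℕ → ℝ) (C : ℝ)
    (h0 : ∀ n, 0 ≤ f n) (hC : ∀ n, f n ≤ C) :
    Summable (fun n => f n / S ^ (n + 1)) := by
  have h0S : (0:ℝ) < S := one_pos.trans hS
  have habs : ‖S⁻¹‖ < 1 := by
    rw [Real.norm_eq_abs, abs_of_pos (inv_pos.2 h0S)]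
    exact inv_lt_one_of_one_lt₀ hS
  have hg : Summable (fun n : ℕ => (C / S) * S⁻¹ ^ n) :=
    (summable_geometric_of_norm_lt_one habs).mul_left _
  apply Summable.of_nonneg_of_le (fun n => div_nonneg (h0 n) (by positivity)) _ hg
  intro n
  have : C / S * S⁻¹ ^ n = C / S ^ (n+1) := by
    rw [pow_succ, inv_pow]
    field_simp
    try ring
    try exact Or.inl trivial
  rw [this]
  exact div_le_div_of_nonneg_right (hC n) (by positivity) |>.trans_eq rfl

lemma tsum_zero_term {f : ℕ → ℝ} (hf : Summable f) (h0 : ∀ n, 0 ≤ f n)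
    (ht : ∑' n, f n = 0) : ∀ n, f n = 0 := by
  intro n
  exact le_antisymm (le_trans (Summable.le_tsum hf n (fun j _ => h0 j)) ht.le) (h0 n)

set_option maxHeartbeats 1000000 in

lemma sval_eq_cases (s : ℕ) (hs : 2 < s) (α α' : ℕ → ℕ) (hα : isDigits s α)
    (hα' : isDigits s α') (h : sval s α = sval s α') (m : ℕ)
    (hpre : ∀ i < m, α i = α' i) (hm : α' m < α m) :
    α m = α' m + 1 ∧ (∀ n, m < n → α n = 0) ∧ (∀ n, m < n → α' n = s - 1) := by
  set S : ℝ := (s : ℝ) with hSdef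
  have hS1 : (1:ℝ) < S := by
    simp only [hSdef]
    exact_mod_cast Nat.lt_of_lt_of_le one_lt_two hs.le
  have hS0 : (0:ℝ) < S := one_pos.trans hS1
  have hdig : ∀ n, ((α n : ℝ)) ≤ S - 1 := by
    intro n
    have := hα n
    have : (α n : ℝ) ≤ (s:ℝ) - 1 := by
      have h1 : α n + 1 ≤ s := this
      have := Nat.cast_le (α := ℝ).2 h1
      push_cast at this
      linarith
    exact this
  have hdig' : ∀ n, ((α' n : ℝ)) ≤ S - 1 := by
    intro n
    have h1 : α' n + 1 ≤ s := hα' n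
    have := Nat.cast_le (α := ℝ).2 h1
    push_cast at this
    linarith
  have Sα : Summable (fun n => (α n : ℝ) / S ^ (n+1)) :=
    summable_aux S hS1 _ (S-1) (fun n => Nat.cast_nonneg _) hdig
  have Sα' : Summable (fun n => (α' n : ℝ) / S ^ (n+1)) :=
    summable_aux S hS1 _ (S-1) (fun n => Nat.cast_nonneg _) hdig'
  -- split at m+1
  have hsplit := Summable.sum_add_tsum_nat_add (m+1) Sα
  have hsplit' := Summable.sum_add_tsum_nat_add (m+1) Sα'
  set T : ℝ := ∑' n : ℕ, (α (n + (m+1)) : ℝ) / S ^ (n + (m+1) + 1) with hT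
  set T' : ℝ := ∑' n : ℕ, (α' (n + (m+1)) : ℝ) / S ^ (n + (m+1) + 1) with hT'
  have Stail : Summable (fun n : ℕ => (α (n + (m+1)) : ℝ) / S ^ (n + (m+1) + 1)) := by
    exact (summable_nat_add_iff (f := fun n => (α n : ℝ)/S^(n+1)) (m+1)).2 Sα
  have Stail' : Summable (fun n : ℕ => (α' (n + (m+1)) : ℝ) / S ^ (n + (m+1) + 1)) := by
    exact (summable_nat_add_iff (f := fun n => (α' n : ℝ)/S^(n+1)) (m+1)).2 Sα'
  have hprefix : ∑ i ∈ Finset.range m, (α i : ℝ) / S ^ (i+1)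
      = ∑ i ∈ Finset.range m, (α' i : ℝ) / S ^ (i+1) := by
    apply Finset.sum_congr rfl
    intro i hi
    rw [hpre i (Finset.mem_range.1 hi)]
  have hkey : (α m : ℝ) / S ^ (m+1) + T = (α' m : ℝ) / S ^ (m+1) + T' := by
    have e1 : sval s α = ∑ i ∈ Finset.range (m+1), (α i : ℝ) / S ^ (i+1) + T := by
      exact hsplit.symm
    have e2 : sval s α' = ∑ i ∈ Finset.range (m+1), (α' i : ℝ) / S ^ (i+1) + T' := by
      exact hsplit'.symm
    rw [e1, e2, Finset.sum_range_succ, Finset.sum_range_succ, hprefix] at h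
    linarith
  have hpow : (0:ℝ) < S ^ (m+1) := by positivity
  have hPne : (S:ℝ) ^ (m+1) ≠ 0 := ne_of_gt hpow
  have hTnonneg : 0 ≤ T := tsum_nonneg (fun n => div_nonneg (Nat.cast_nonneg _) (by positivity))
  have Sconst : Summable (fun n : ℕ => (S - 1) / S ^ (n + (m+1) + 1)) := by
    have h1 : Summable (fun n : ℕ => (S - 1) / S ^ (n + 1)) :=
      summable_aux S hS1 (fun _ => S - 1) (S-1) (fun _ => by show (0:ℝ) ≤ S - 1; linarith) (fun _ => le_refl _)
    exact (summable_nat_add_iff (f := fun n : ℕ => (S - 1) / S ^ (n + 1)) (m+1)).2 h1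
  have hconst : ∑' n : ℕ, (S - 1) / S ^ (n + (m+1) + 1) = 1 / S ^ (m+1) := by
    rw [geom_aux S hS1 (S-1) (m+1)]
    have h2 : S - 1 ≠ 0 := sub_ne_zero.2 (ne_of_gt hS1)
    field_simp
  have hT'le : T' ≤ 1 / S ^ (m+1) := by
    have hle : T' ≤ ∑' n : ℕ, (S - 1) / S ^ (n + (m+1) + 1) := by
      refine Summable.tsum_le_tsum (fun n => ?_) Stail' Sconst
      exact div_le_div_of_nonneg_right (hdig' _) (by positivity)
    linarith [hconst]
  have hkey2 : (α m : ℝ) + T * S ^ (m+1) = (α' m : ℝ) + T' * S ^ (m+1) := by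
    have h2 := congrArg (· * S ^ (m+1)) hkey
    simp only [add_mul, div_mul_cancel₀ _ hPne] at h2
    exact h2
  have hdiffle : (α m : ℝ) - (α' m : ℝ) ≤ 1 := by
    have h2 : (T' - T) * S ^ (m+1) ≤ (1 / S ^ (m+1)) * S ^ (m+1) :=
      mul_le_mul_of_nonneg_right (by linarith) hpow.le
    have h3 : (1 / S ^ (m+1)) * S ^ (m+1) = 1 := by field_simp
    nlinarith [hkey2]
  have heq1 : α m = α' m + 1 := by
    have h2 : (α m : ℝ) ≤ (α' m : ℝ) + 1 := by linarith
    have h1 : α m ≤ α' m + 1 := by exact_mod_cast h2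
    omega
  have hTT' : T' - T = 1 / S ^ (m+1) := by
    have hc : (α m : ℝ) = (α' m : ℝ) + 1 := by exact_mod_cast heq1
    have h3 : (T' - T) * S ^ (m+1) = 1 := by nlinarith [hkey2]
    field_simp
    linarith [h3]
  have hT0 : T = 0 := by linarith
  have hT'max : T' = 1 / S ^ (m+1) := by linarith
  refine ⟨heq1, ?_, ?_⟩
  · -- all α n = 0 for n > m
    have hz := tsum_zero_term Stail (fun n => div_nonneg (Nat.cast_nonneg _) (by positivity)) hT0
    intro n hn
    have h1 := hz (n - (m+1))
    have h2 : n - (m+1) + (m+1) = n := by omega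
    rw [h2] at h1
    rcases div_eq_zero_iff.1 h1 with h3 | h3
    · exact_mod_cast h3
    · exact absurd h3 (by positivity)
  · -- all α' n = s - 1 for n > m
    have hsum : Summable (fun n : ℕ => (S - 1) / S ^ (n + (m+1) + 1) - (α' (n + (m+1)) : ℝ) / S ^ (n + (m+1) + 1)) :=
      Sconst.sub Stail'
    have htsum : ∑' n : ℕ, ((S - 1) / S ^ (n + (m+1) + 1) - (α' (n + (m+1)) : ℝ) / S ^ (n + (m+1) + 1)) = 0 := by
      rw [Summable.tsum_sub Sconst Stail', hconst, ← hT', hT'max, sub_self]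
    have hterm := tsum_zero_term hsum (fun n => by
      have hd2 := hdig' (n + (m+1))
      have hpow2 : (0:ℝ) < S ^ (n + (m+1) + 1) := by positivity
      have := div_le_div_of_nonneg_right hd2 hpow2.le
      linarith) htsum
    intro n hn
    have h1 := hterm (n - (m+1))
    have h2 : n - (m+1) + (m+1) = n := by omega
    rw [h2] at h1
    have hpow2 : (0:ℝ) < S ^ (n+1) := by positivity
    have h3 : (α' n : ℝ) = S - 1 := by
      have h4 : ((S - 1) - (α' n : ℝ)) / S ^ (n + 1) = 0 := by
        rw [sub_div]; linarith
      rcases div_eq_zero_iff.1 h4 with h5 | h5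
      · linarith
      · exact absurd h5 (ne_of_gt hpow2)
    have h4 : (α' n : ℝ) = ((s - 1 : ℕ) : ℝ) := by
      rw [h3]
      have h5 : (1:ℕ) ≤ s := by omega
      push_cast [Nat.cast_sub h5]
      simp [hSdef]
    exact_mod_cast h4

lemma betaSeq_le_one (A1 : Finset ℕ) (α : ℕ → ℕ) (n : ℕ) : betaSeq A1 α n ≤ 1 := by
  induction n with
  | zero => unfold betaSeq; split <;> omega
  | succ n ih => unfold betaSeq; split <;> omega

lemma betaSeq_congr (A1 : Finset ℕ) (α α' : ℕ → ℕ) (n : ℕ) (h : ∀ i ≤ n, α i = α' i) :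
    betaSeq A1 α n = betaSeq A1 α' n := by
  induction n with
  | zero => unfold betaSeq; rw [h 0 le_rfl]
  | succ n ih =>
    have h1 := h (n+1) le_rfl
    have h2 := h n (Nat.le_succ n)
    have h3 := ih (fun i hi => h i (hi.trans (Nat.le_succ n)))
    unfold betaSeq
    rw [h1, h2, h3]

lemma betaSeq_tail_const (A1 : Finset ℕ) (α : ℕ → ℕ) (m : ℕ)
    (hne : α (m+1) ≠ α m) (hconst : ∀ n, m+1 ≤ n → α n = α (m+1)) :
    ∀ n, m+1 ≤ n → betaSeq A1 α n = 1 - betaSeq A1 α m := by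
  intro n hn
  induction n with
  | zero => omega
  | succ k ih =>
    rcases Nat.lt_or_ge k (m+1) with hk | hk
    · have hkm : k = m := by omega
      subst hkm
      simp only [betaSeq]
      rw [if_neg hne]
    · have e1 : α (k+1) = α (m+1) := hconst (k+1) (by omega)
      have e2 : α k = α (m+1) := hconst k hk
      have : betaSeq A1 α (k+1) = betaSeq A1 α k := by
        simp only [betaSeq]
        rw [if_pos (e1.trans e2.symm)]
      rw [this, ih hk]

lemma summable_beta (A1 : Finset ℕ) (α : ℕ → ℕ) :
    Summable (fun n => (betaSeq A1 α n : ℝ) / (2:ℝ) ^ (n+1)) :=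
  summable_aux 2 one_lt_two _ 1 (fun n => Nat.cast_nonneg _)
    (fun n => by exact_mod_cast betaSeq_le_one A1 α n)

lemma sval_beta_eq (A1 : Finset ℕ) (α : ℕ → ℕ) (m : ℕ)
    (hne : α (m+1) ≠ α m) (hconst : ∀ n, m+1 ≤ n → α n = α (m+1)) :
    sval 2 (betaSeq A1 α) =
      ∑ i ∈ Finset.range m, (betaSeq A1 α i : ℝ) / 2 ^ (i+1) + 1 / 2 ^ (m+1) := by
  have hsum := summable_beta A1 α
  have hsplit := Summable.sum_add_tsum_nat_add (f := fun n => (betaSeq A1 α n : ℝ) / (2:ℝ) ^ (n+1)) (m+1) hsum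
  have htail : ∑' n : ℕ, (betaSeq A1 α (n + (m+1)) : ℝ) / (2:ℝ) ^ (n + (m+1) + 1)
      = ((1 - betaSeq A1 α m : ℕ) : ℝ) / 2 ^ (m+1) := by
    have hc : ∀ n : ℕ, (betaSeq A1 α (n + (m+1)) : ℝ) / (2:ℝ) ^ (n + (m+1) + 1)
        = ((1 - betaSeq A1 α m : ℕ) : ℝ) / (2:ℝ) ^ (n + (m+1) + 1) := by
      intro n
      rw [betaSeq_tail_const A1 α m hne hconst (n + (m+1)) (by omega)]
    rw [tsum_congr hc, geom_aux 2 one_lt_two _ (m+1)]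
    norm_num
  have e1 : sval 2 (betaSeq A1 α)
      = ∑ i ∈ Finset.range (m+1), (betaSeq A1 α i : ℝ) / 2 ^ (i+1)
        + ((1 - betaSeq A1 α m : ℕ) : ℝ) / 2 ^ (m+1) := by
    rw [← htail]
    exact hsplit.symm
  rw [e1, Finset.sum_range_succ]
  have hb := betaSeq_le_one A1 α m
  have hcast : ((1 - betaSeq A1 α m : ℕ) : ℝ) = 1 - (betaSeq A1 α m : ℝ) := by
    push_cast [Nat.cast_sub hb]
    ring
  rw [hcast]
  ring

lemma main_aux (s : ℕ) (hs : 2 < s) (A1 : Finset ℕ) (α α' : ℕ → ℕ)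
    (hα : isDigits s α) (hα' : isDigits s α') (h : sval s α = sval s α')
    (m : ℕ) (hpre : ∀ i < m, α i = α' i) (hm : α' m < α m) :
    sval 2 (betaSeq A1 α) = sval 2 (betaSeq A1 α') := by
  obtain ⟨heq, hz, ho⟩ := sval_eq_cases s hs α α' hα hα' h m hpre hm
  have hs1 : 1 ≤ s := by omega
  have h1 : α (m+1) ≠ α m := by
    have := hz (m+1) (by omega)
    omega
  have h2 : ∀ n, m+1 ≤ n → α n = α (m+1) := by
    intro n hn
    rw [hz n (by omega), hz (m+1) (by omega)]
  have h1' : α' (m+1) ≠ α' m := by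
    have ha : α m < s := hα m
    have hb := ho (m+1) (by omega)
    have hc : α m = α' m + 1 := heq
    omega
  have h2' : ∀ n, m+1 ≤ n → α' n = α' (m+1) := by
    intro n hn
    rw [ho n (by omega), ho (m+1) (by omega)]
  rw [sval_beta_eq A1 α m h1 h2, sval_beta_eq A1 α' m h1' h2']
  congr 1
  apply Finset.sum_congr rfl
  intro i hi
  rw [betaSeq_congr A1 α α' i (fun j hj => hpre j (by
    have := Finset.mem_range.1 hi; omega))]

/-- the map `f` given on codes by the `β`-recursion is well defined on `[0,1]`:
any two `s`-adic codes of the same number yield the same value `∑ βₙ 2^{-n}`. -/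
theorem f_well_defined (s : ℕ) (hs : 2 < s) (A0 A1 : Finset ℕ)
    (hA : A0 ∪ A1 = Finset.range s) (hdisj : Disjoint A0 A1)
    (h0 : A0.Nonempty) (h1 : A1.Nonempty)
    (α α' : ℕ → ℕ) (hα : isDigits s α) (hα' : isDigits s α')
    (h : sval s α = sval s α') :
    sval 2 (betaSeq A1 α) = sval 2 (betaSeq A1 α') := by

  by_cases hcase : ∀ n, α n = α' n
  · have : α = α' := funext hcase
    rw [this]
  · push_neg at hcase
    have hex : ∃ n, α n ≠ α' n := hcase
    set m := Nat.find hex with hm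
    have hdiff : α m ≠ α' m := Nat.find_spec hex
    have hpre : ∀ i < m, α i = α' i := by
      intro i hi
      have := Nat.find_min hex hi
      tauto
    rcases Nat.lt_or_ge (α' m) (α m) with hlt | hge
    · exact main_aux s hs A1 α α' hα hα' h m hpre hlt
    · have hlt : α m < α' m := by omega
      exact (main_aux s hs A1 α' α hα' hα h.symm m (fun i hi => (hpre i hi).symm) hlt).symm
end

section
/- The function f: [0,1] → [0,1], defined on s-adic expansions by f(Σ αₙ s^{-n}) = Σ βₙ 2^{-n} with β₁ determined by whether α₁ ∈ A₀ or A₁, and β_{n+1} = βₙ iff α_{n+1} = αₙ, is continuous on [0,1]. -/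
open Set Filter

/-!
All points of a closed `s`-adic cell `[k / sᵐ, (k + 1) / sᵐ]` have expansions sharing their first
`m` digits (prepend the leading digit of `k` and rescale the cell), and `βₙ` depends only on
`α₀, …, αₙ`, so `f` varies by at most `2⁻ᵐ` on such a cell. Two points at distance at most `s⁻ᵐ`
lie in one cell or in two adjacent cells sharing an endpoint, so `f` is even uniformly continuous.
-/

section Digits

variable {b : ℕ} {α γ : ℕ → ℕ}

theorem sval_eq_ofDigits (hα : isDigits b α) :
    sval b α = Real.ofDigits (fun n ↦ (⟨α n, hα n⟩ : Fin b)) :=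
  tsum_congr fun _ ↦ div_eq_mul_inv _ _

theorem abs_sval_sub_sval_le {m : ℕ} (hα : isDigits b α) (hγ : isDigits b γ)
    (h : ∀ i < m, α i = γ i) : |sval b α - sval b γ| ≤ ((b : ℝ) ^ m)⁻¹ := by
  rw [sval_eq_ofDigits hα, sval_eq_ofDigits hγ]
  exact Real.abs_ofDigits_sub_ofDigits_le fun i hi ↦ Fin.ext (h i hi)

theorem exists_sval_eq (hb : 1 < b) {x : ℝ} (hx : x ∈ Icc 0 1) :
    ∃ α, isDigits b α ∧ sval b α = x := by
  obtain ⟨d, -, rfl⟩ := Real.ofDigits_SurjOn hb hx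
  exact ⟨fun n ↦ d n, fun n ↦ (d n).isLt, sval_eq_ofDigits _⟩

def consDigit (d : ℕ) (α : ℕ → ℕ) : ℕ → ℕ
  | 0 => d
  | n + 1 => α n

theorem isDigits_consDigit {d : ℕ} (hd : d < b) (hα : isDigits b α) :
    isDigits b (consDigit d α)
  | 0 => hd
  | n + 1 => hα n

theorem sval_consDigit {d : ℕ} (hd : d < b) (hα : isDigits b α) :
    sval b (consDigit d α) = (d + sval b α) / b := by
  rw [sval_eq_ofDigits (isDigits_consDigit hd hα), Real.ofDigits_eq_sum_add_ofDigits _ 1,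
    sval_eq_ofDigits hα]
  simp only [Finset.range_one, Finset.sum_singleton, Real.ofDigitsTerm, consDigit, zero_add,
    pow_one]
  ring

end Digits

theorem Icc_subset_cylinder {b : ℕ} (hb : 1 < b) {m k : ℕ} (hk : k < b ^ m) :
    ∃ c, Icc ((k : ℝ) / b ^ m) ((k + 1) / b ^ m) ⊆ cylinder b m c := by
  induction m generalizing k with
  | zero =>
    refine ⟨0, fun x hx ↦ ?_⟩
    obtain ⟨α, hα, rfl⟩ := exists_sval_eq hb (by simpa [Nat.lt_one_iff.mp hk] using hx)
    exact ⟨α, hα, nofun, rfl⟩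
  | succ m ih =>
    -- `x ↦ b * x - k / b ^ m` maps the cell onto the cell of rank `m` with index `k % b ^ m`
    have hd : k / b ^ m < b := Nat.div_lt_of_lt_mul (by rwa [← pow_succ])
    obtain ⟨c, hc⟩ := ih (Nat.mod_lt k (by positivity))
    refine ⟨consDigit (k / b ^ m) c, fun x ⟨hx₀, hx₁⟩ ↦ ?_⟩
    have hk_eq : (k : ℝ) = b ^ m * (k / b ^ m : ℕ) + (k % b ^ m : ℕ) := by
      exact_mod_cast (Nat.div_add_mod k (b ^ m)).symm
    have hbm : (0 : ℝ) < b ^ m := by positivity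
    rw [div_le_iff₀ (by positivity), pow_succ] at hx₀
    rw [le_div_iff₀ (by positivity), pow_succ] at hx₁
    obtain ⟨α, hα, hαc, hαx⟩ : b * x - (k / b ^ m : ℕ) ∈ cylinder b m c := by
      refine hc ⟨?_, ?_⟩
      · rw [div_le_iff₀ hbm]; nlinarith
      · rw [le_div_iff₀ hbm]; nlinarith
    refine ⟨consDigit (k / b ^ m) α, isDigits_consDigit hd hα, ?_, ?_⟩
    · rintro (_ | i) hi
      · rfl
      · exact hαc i (by omega)
    · rw [sval_consDigit hd hα, ← hαx]
      field_simp
      ring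

section BetaSeq

variable (A1 : Finset ℕ) {α γ : ℕ → ℕ}

theorem isDigits_betaSeq (α : ℕ → ℕ) : isDigits 2 (betaSeq A1 α)
  | 0 => by rw [betaSeq]; split <;> omega
  | n + 1 => by rw [betaSeq]; have := isDigits_betaSeq α n; split <;> omega

theorem betaSeq_eq_of_forall_le {n : ℕ} (h : ∀ i ≤ n, α i = γ i) :
    betaSeq A1 α n = betaSeq A1 γ n := by
  induction n with
  | zero => simp only [betaSeq, h 0 le_rfl]
  | succ n ih =>
    simp only [betaSeq, h (n + 1) le_rfl, h n n.le_succ, ih fun i hi ↦ h i (hi.trans n.le_succ)]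

end BetaSeq

theorem abs_sub_le_of_mem_cylinder {s m : ℕ} {c : ℕ → ℕ} {A1 : Finset ℕ} {f : ℝ → ℝ}
    (hf : ∀ α : ℕ → ℕ, isDigits s α → f (sval s α) = sval 2 (betaSeq A1 α)) {x y : ℝ}
    (hx : x ∈ cylinder s m c) (hy : y ∈ cylinder s m c) : |f x - f y| ≤ (2 ^ m)⁻¹ := by
  obtain ⟨α, hα, hαc, rfl⟩ := hx
  obtain ⟨γ, hγ, hγc, rfl⟩ := hy
  rw [hf α hα, hf γ hγ]
  exact_mod_cast abs_sval_sub_sval_le (isDigits_betaSeq A1 α) (isDigits_betaSeq A1 γ)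
    fun i hi ↦ betaSeq_eq_of_forall_le A1 fun j hj ↦ by rw [hαc j (by omega), hγc j (by omega)]

theorem exists_lt_mem_Icc_div {N : ℕ} (hN : 0 < N) {x : ℝ} (hx : x ∈ Icc 0 1) :
    ∃ k < N, x ∈ Icc ((k : ℝ) / N) ((k + 1) / N) := by
  have hN' : (0 : ℝ) < N := by exact_mod_cast hN
  refine ⟨min ⌊x * N⌋₊ (N - 1), by omega, ?_, ?_⟩
  · rw [div_le_iff₀ hN']
    exact (Nat.cast_le.2 (min_le_left _ _)).trans (Nat.floor_le (by nlinarith [hx.1]))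
  · rw [le_div_iff₀ hN']
    rcases le_total ⌊x * N⌋₊ (N - 1) with h | h
    · rw [min_eq_left h]; exact (Nat.lt_floor_add_one _).le
    · rw [min_eq_right h, Nat.cast_pred hN]; nlinarith [hx.2]

theorem abs_sub_le_two_mul_of_forall_Icc {g : ℝ → ℝ} {N : ℕ} (hN : 0 < N) {c : ℝ}
    (hg : ∀ k < N, ∀ x ∈ Icc ((k : ℝ) / N) ((k + 1) / N), ∀ y ∈ Icc ((k : ℝ) / N) ((k + 1) / N),
      |g x - g y| ≤ c)
    {x y : ℝ} (hx : x ∈ Icc 0 1) (hy : y ∈ Icc 0 1) (hxy : |x - y| ≤ 1 / N) :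
    |g x - g y| ≤ 2 * c := by
  wlog hle : x ≤ y generalizing x y
  · rw [abs_sub_comm]; exact this hy hx (by rwa [abs_sub_comm]) (by linarith)
  obtain ⟨k, hk, hxk⟩ := exists_lt_mem_Icc_div hN hx
  have hc : 0 ≤ c := (abs_nonneg _).trans (hg k hk x hxk x hxk)
  have hN' : (0 : ℝ) < N := by exact_mod_cast hN
  by_cases hyk : y ≤ (k + 1) / N
  · linarith [hg k hk x hxk y ⟨hxk.1.trans hle, hyk⟩]
  -- `y` lies in the next cell, which shares the endpoint `(k + 1) / N` with that of `x`
  rw [not_le] at hyk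
  have hk1 : k + 1 < N := by
    have : ((k + 1 : ℕ) : ℝ) < N := by push_cast; rw [← div_lt_one hN']; linarith [hy.2]
    exact_mod_cast this
  have hz : ((k : ℝ) + 1) / N ∈ Icc (((k + 1 : ℕ) : ℝ) / N) (((k + 1 : ℕ) + 1) / N) := by
    push_cast; exact ⟨le_rfl, by gcongr; linarith⟩
  have hy' : y ∈ Icc (((k + 1 : ℕ) : ℝ) / N) (((k + 1 : ℕ) + 1) / N) := by
    push_cast
    refine ⟨hyk.le, ?_⟩
    calc y ≤ x + 1 / N := by linarith [(abs_le.1 hxy).1]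
      _ ≤ (k + 1) / N + 1 / N := by linarith [hxk.2]
      _ = (k + 1 + 1) / N := by ring
  calc |g x - g y| ≤ |g x - g ((k + 1) / N)| + |g ((k + 1) / N) - g y| := abs_sub_le _ _ _
    _ ≤ c + c := add_le_add (hg k hk x hxk _ ⟨hxk.1.trans hxk.2, le_rfl⟩) (hg _ hk1 _ hz y hy')
    _ = 2 * c := by ring

theorem f_continuous_general (s : ℕ) (hs : 2 < s) (A1 : Finset ℕ) (f : ℝ → ℝ)
    (hf : ∀ α : ℕ → ℕ, isDigits s α → f (sval s α) = sval 2 (betaSeq A1 α)) :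
    ContinuousOn f (Set.Icc (0 : ℝ) 1) := by
  refine (Metric.uniformContinuousOn_iff_le.2 fun ε hε ↦ ?_).continuousOn
  obtain ⟨m, hm⟩ := exists_pow_lt_of_lt_one (half_pos hε) (by norm_num : (2 : ℝ)⁻¹ < 1)
  have hsm : 0 < s ^ m := by positivity
  refine ⟨1 / (s ^ m : ℕ), by positivity, fun x hx y hy hxy ↦ ?_⟩
  have hcell : ∀ k < s ^ m, ∀ x ∈ Icc ((k : ℝ) / (s ^ m : ℕ)) ((k + 1) / (s ^ m : ℕ)),
      ∀ y ∈ Icc ((k : ℝ) / (s ^ m : ℕ)) ((k + 1) / (s ^ m : ℕ)), |f x - f y| ≤ (2 ^ m)⁻¹ := by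
    intro k hk x hx y hy
    obtain ⟨c, hc⟩ := Icc_subset_cylinder (by omega) hk
    rw [Nat.cast_pow] at hx hy
    exact abs_sub_le_of_mem_cylinder hf (hc hx) (hc hy)
  rw [inv_pow] at hm
  calc dist (f x) (f y) = |f x - f y| := Real.dist_eq _ _
    _ ≤ 2 * (2 ^ m)⁻¹ := abs_sub_le_two_mul_of_forall_Icc hsm hcell hx hy hxy
    _ ≤ ε := by linarith

/-- the function `f` is continuous on `[0,1]`. -/
theorem f_continuous (s : ℕ) (hs : 2 < s) (A0 A1 : Finset ℕ)
    (hA : A0 ∪ A1 = Finset.range s) (hdisj : Disjoint A0 A1)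
    (h0 : A0.Nonempty) (h1 : A1.Nonempty) (f : ℝ → ℝ)
    (hf : ∀ α : ℕ → ℕ, isDigits s α → f (sval s α) = sval 2 (betaSeq A1 α)) :
    ContinuousOn f (Set.Icc (0 : ℝ) 1) :=
  f_continuous_general s hs A1 f hf
end

section
/- The range of the function f is the entire interval [0,1]. -/
open Set Filter

lemma aux_summable {s : ℕ} (hs : 2 ≤ s) (α : ℕ → ℕ) (hd : ∀ n, α n ≤ s) :
    Summable (fun n => (α n : ℝ) / (s : ℝ) ^ (n + 1)) := by
  have hs1 : (1:ℝ) < s := by exact_mod_cast lt_of_lt_of_le one_lt_two hs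
  have hs0 : (0:ℝ) < s := lt_trans one_pos hs1
  have hgeo : Summable (fun n : ℕ => ((s:ℝ)⁻¹) ^ n) :=
    summable_geometric_of_lt_one (by positivity) (inv_lt_one_of_one_lt₀ hs1)
  refine Summable.of_nonneg_of_le (fun n => by positivity) (fun n => ?_) hgeo
  have hb : (α n : ℝ) ≤ s := by exact_mod_cast hd n
  calc (α n : ℝ) / (s:ℝ)^(n+1) ≤ (s:ℝ) / (s:ℝ)^(n+1) := by gcongr
    _ = ((s:ℝ)⁻¹)^n := by
        rw [inv_pow, pow_succ]
        field_simp

lemma aux_tsum_max {s : ℕ} (hs : 2 ≤ s) :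
    ∑' n : ℕ, ((s:ℝ) - 1) / (s : ℝ) ^ (n + 1) = 1 := by
  have hs1 : (1:ℝ) < s := by exact_mod_cast lt_of_lt_of_le one_lt_two hs
  have hs0 : (0:ℝ) < s := lt_trans one_pos hs1
  have hne : (s:ℝ) - 1 ≠ 0 := by linarith
  have h : ∀ n : ℕ, ((s:ℝ) - 1) / (s : ℝ) ^ (n + 1)
      = (((s:ℝ) - 1) / s) * ((s:ℝ)⁻¹) ^ n := by
    intro n
    rw [inv_pow, inv_eq_one_div, div_mul_div_comm, mul_one, ← pow_succ']
  simp only [h]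
  rw [tsum_mul_left, tsum_geometric_of_lt_one (by positivity) (inv_lt_one_of_one_lt₀ hs1)]
  have h2 : (1 - (s:ℝ)⁻¹) = ((s:ℝ) - 1) / s := by
    field_simp
  rw [h2]
  have h3 : ((s:ℝ) - 1) / s ≠ 0 := div_ne_zero hne (ne_of_gt hs0)
  rw [mul_inv_cancel₀ h3]

lemma aux_sval_mem {s : ℕ} (hs : 2 ≤ s) {α : ℕ → ℕ} (hα : isDigits s α) :
    sval s α ∈ Set.Icc (0:ℝ) 1 := by
  have hs1 : (1:ℝ) < s := by exact_mod_cast lt_of_lt_of_le one_lt_two hs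
  have hsum := aux_summable hs α (fun n => (hα n).le)
  constructor
  · exact tsum_nonneg (fun n => by positivity)
  · rw [sval, ← aux_tsum_max hs]
    refine Summable.tsum_le_tsum (fun n => ?_) hsum ?_
    · apply div_le_div_of_nonneg_right _ (by positivity)
      have : (α n : ℝ) + 1 ≤ s := by exact_mod_cast hα n
      linarith
    · have : ∀ n : ℕ, ((s:ℝ) - 1) / (s:ℝ)^(n+1) = (((s - 1 : ℕ) : ℝ)) / (s:ℝ)^(n+1) := by
        intro n
        rw [Nat.cast_sub (le_trans one_le_two hs)]
        norm_num
      simp only [this]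
      exact aux_summable hs (fun _ => s - 1) (fun _ => Nat.sub_le s 1)

/-- every point of `[0,1]` has an `s`-adic expansion -/
lemma aux_expansion {s : ℕ} (hs : 2 ≤ s) {x : ℝ} (hx : x ∈ Set.Icc (0:ℝ) 1) :
    ∃ α : ℕ → ℕ, isDigits s α ∧ sval s α = x := by
  have hs1 : (1:ℝ) < s := by exact_mod_cast lt_of_lt_of_le one_lt_two hs
  have hs0 : (0:ℝ) < s := lt_trans one_pos hs1
  rcases eq_or_lt_of_le hx.2 with h1 | h1
  · -- x = 1 : use constant digit s-1
    refine ⟨fun _ => s - 1, fun n => by show s - 1 < s; omega, ?_⟩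
    have hc : ∀ n : ℕ, (((s - 1 : ℕ) : ℝ)) / (s:ℝ)^(n+1) = ((s:ℝ) - 1) / (s:ℝ)^(n+1) := by
      intro n
      rw [Nat.cast_sub (le_trans one_le_two hs)]
      norm_num
    rw [sval]
    simp only [hc]
    rw [aux_tsum_max hs, h1]
  · -- x < 1
    set F : ℕ → ℤ := fun n => ⌊x * (s:ℝ)^n⌋ with hFdef
    have hFle : ∀ n, (F n : ℝ) ≤ x * (s:ℝ)^n := fun n => Int.floor_le _
    have hFlt : ∀ n, x * (s:ℝ)^n < F n + 1 := fun n => Int.lt_floor_add_one _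
    have hlow : ∀ n, (s:ℤ) * F n ≤ F (n+1) := by
      intro n
      rw [hFdef]
      apply Int.le_floor.2
      push_cast
      calc (s:ℝ) * (F n : ℝ) ≤ (s:ℝ) * (x * (s:ℝ)^n) := by
            exact mul_le_mul_of_nonneg_left (hFle n) hs0.le
        _ = x * (s:ℝ)^(n+1) := by ring
    have hhigh : ∀ n, F (n+1) < (s:ℤ) * F n + s := by
      intro n
      rw [hFdef]
      apply Int.floor_lt.2
      push_cast
      calc x * (s:ℝ)^(n+1) = (s:ℝ) * (x * (s:ℝ)^n) := by ring
        _ < (s:ℝ) * ((F n : ℝ) + 1) := by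
            exact mul_lt_mul_of_pos_left (hFlt n) hs0
        _ = (s:ℝ) * (F n : ℝ) + s := by ring
    set α : ℕ → ℕ := fun n => (F (n+1) - (s:ℤ) * F n).toNat with hαdef
    have hαcast : ∀ n, (α n : ℤ) = F (n+1) - (s:ℤ) * F n := by
      intro n
      exact Int.toNat_of_nonneg (by linarith [hlow n])
    have hdig : isDigits s α := by
      intro n
      have h := hhigh n
      have := hαcast n
      omega
    have hF0 : F 0 = 0 := by
      rw [hFdef]
      simp only [pow_zero, mul_one]
      exact Int.floor_eq_zero_iff.2 ⟨hx.1, h1⟩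
    have hpartial : ∀ N, ∑ n ∈ Finset.range N, (α n : ℝ) / (s:ℝ)^(n+1)
        = (F N : ℝ) / (s:ℝ)^N := by
      intro N
      have hterm : ∀ n, (α n : ℝ) / (s:ℝ)^(n+1)
          = (F (n+1) : ℝ) / (s:ℝ)^(n+1) - (F n : ℝ) / (s:ℝ)^n := by
        intro n
        have hc : (α n : ℝ) = (F (n+1) : ℝ) - (s:ℝ) * (F n : ℝ) := by
          exact_mod_cast congrArg (Int.cast : ℤ → ℝ) (hαcast n)
        rw [hc]
        field_simp
        ring
      simp only [hterm]
      rw [Finset.sum_range_sub (fun n => (F n : ℝ) / (s:ℝ)^n), hF0]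
      simp
    -- partial sums tend to x
    have htend : Tendsto (fun N => ∑ n ∈ Finset.range N, (α n : ℝ) / (s:ℝ)^(n+1))
        atTop (nhds x) := by
      simp only [hpartial]
      have hdiff : ∀ N, x - ((s:ℝ)⁻¹)^N ≤ (F N : ℝ) / (s:ℝ)^N ∧ (F N : ℝ)/(s:ℝ)^N ≤ x := by
        intro N
        have hp : (0:ℝ) < (s:ℝ)^N := by positivity
        have hinv : ((s:ℝ)⁻¹)^N * (s:ℝ)^N = 1 := by
          rw [inv_pow]; exact inv_mul_cancel₀ (ne_of_gt hp)
        constructor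
        · rw [le_div_iff₀ hp]
          have := hFlt N
          nlinarith
        · rw [div_le_iff₀ hp]
          linarith [hFle N]
      have hg : Tendsto (fun N : ℕ => x - ((s:ℝ)⁻¹)^N) atTop (nhds x) := by
        have : Tendsto (fun N : ℕ => ((s:ℝ)⁻¹)^N) atTop (nhds 0) :=
          tendsto_pow_atTop_nhds_zero_of_lt_one (by positivity) (inv_lt_one_of_one_lt₀ hs1)
        simpa using tendsto_const_nhds.sub this
      exact tendsto_of_tendsto_of_tendsto_of_le_of_le hg tendsto_const_nhds
        (fun N => (hdiff N).1) (fun N => (hdiff N).2)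
    have hsum := aux_summable hs α (fun n => (hdig n).le)
    refine ⟨α, hdig, ?_⟩
    rw [sval]
    exact tendsto_nhds_unique hsum.hasSum.tendsto_sum_nat htend

lemma aux_beta_digits (A1 : Finset ℕ) (α : ℕ → ℕ) : ∀ n, betaSeq A1 α n ≤ 1 := by
  intro n
  induction n with
  | zero => rw [betaSeq]; split <;> omega
  | succ n ih => rw [betaSeq]; split <;> omega

/-- the range of `f` is the whole interval `[0,1]`. -/
theorem f_range (s : ℕ) (hs : 2 < s) (A0 A1 : Finset ℕ)
    (hA : A0 ∪ A1 = Finset.range s) (hdisj : Disjoint A0 A1)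
    (h0 : A0.Nonempty) (h1 : A1.Nonempty) (f : ℝ → ℝ)
    (hf : ∀ α : ℕ → ℕ, isDigits s α → f (sval s α) = sval 2 (betaSeq A1 α)) :
    f '' Set.Icc (0 : ℝ) 1 = Set.Icc (0 : ℝ) 1 := by
  have hs2 : 2 ≤ s := hs.le
  apply Set.Subset.antisymm
  · rintro _ ⟨x, hx, rfl⟩
    obtain ⟨α, hd, hxa⟩ := aux_expansion hs2 hx
    rw [← hxa, hf α hd]
    exact aux_sval_mem le_rfl (fun n => lt_of_le_of_lt (aux_beta_digits A1 α n) one_lt_two)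
  · intro y hy
    obtain ⟨β, hβd, hβy⟩ := aux_expansion (le_refl 2) hy
    obtain ⟨a0, ha0⟩ := h0
    obtain ⟨a1, ha1⟩ := h1
    have ha0s : a0 < s := by
      have : a0 ∈ Finset.range s := hA ▸ Finset.mem_union_left _ ha0
      simpa using this
    have ha1s : a1 < s := by
      have : a1 ∈ Finset.range s := hA ▸ Finset.mem_union_right _ ha1
      simpa using this
    have ha01 : a0 ∉ A1 := fun h => (Finset.disjoint_left.1 hdisj ha0) h
    -- build the input digit sequence
    set a : ℕ → ℕ := fun n => Nat.rec (if β 0 = 1 then a1 else a0)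
      (fun n an => if β (n+1) = β n then an else if an = 0 then 1 else 0) n with hadef
    have ha0' : a 0 = if β 0 = 1 then a1 else a0 := rfl
    have haS : ∀ n, a (n+1) = if β (n+1) = β n then a n else if a n = 0 then 1 else 0 :=
      fun n => rfl
    have hadig : isDigits s a := by
      intro n
      induction n with
      | zero => rw [ha0']; split <;> omega
      | succ n ih =>
        rw [haS]
        split
        · exact ih
        · split <;> omega
    have hbeta : ∀ n, betaSeq A1 a n = β n := by
      intro n
      induction n with
      | zero =>
        rw [betaSeq, ha0']
        by_cases h : β 0 = 1
        · simp [h, ha1]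
        · have : β 0 = 0 := by have := hβd 0; omega
          simp [h, this, ha01]
      | succ n ih =>
        rw [betaSeq, haS]
        by_cases h : β (n+1) = β n
        · simp [h, ih]
        · have hne : (if a n = 0 then 1 else 0) ≠ a n := by split <;> omega
          rw [if_neg h, if_neg hne, ih]
          have := hβd n
          have := hβd (n+1)
          omega
    refine ⟨sval s a, aux_sval_mem hs2 hadig, ?_⟩
    rw [hf a hadig]
    have : betaSeq A1 a = β := funext hbeta
    rw [this, hβy]
end

section
/- For any digit a ∈ {1,…,s−1}, the two s-adic codes (a,0,0,0,…) and (a−1,s−1,s−1,…) of the point a/s are mapped by f to the binary codes (i,1−i,i,1−i,…) and (j,1−j,j,…) respectively, where i = [a ∈ A₁] and j = [a−1 ∈ A₁]; both binary codes represent the same real number in [0,1]. -/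
/-! Both codes of `a/s` have a first digit that differs from the constant digit after it, so `β`
flips exactly once, at index `1`, giving a binary code `(k, 1−k, 1−k, …)`; for `k ∈ {0, 1}` this is
one of the two codes of `1/2`. -/

open Set Filter

theorem betaSeq_ite_zero (A1 : Finset ℕ) {x c : ℕ} (hcx : c ≠ x) :
    betaSeq A1 (fun n => if n = 0 then x else c) =
      fun n => if n = 0 then (if x ∈ A1 then 1 else 0) else 1 - (if x ∈ A1 then 1 else 0) := by
  funext n
  induction n with
  | zero => simp [betaSeq]
  | succ n ih =>
    cases n with
    | zero => simp [betaSeq, hcx]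
    | succ n => simpa [betaSeq] using ih

theorem sval_ite_zero {s : ℕ} (hs : 1 < s) (x c : ℕ) :
    sval s (fun n => if n = 0 then x else c) = x / s + c / (s * (s - 1)) := by
  have hs' : (1 : ℝ) < s := by exact_mod_cast hs
  have htail : HasSum (fun n : ℕ => (c : ℝ) / s ^ (n + 2)) (c / (s * (s - 1))) := by
    have hgeom := (hasSum_geometric_of_lt_one (r := (s : ℝ)⁻¹) (by positivity)
      (inv_lt_one_of_one_lt₀ hs')).mul_left ((c : ℝ) / s ^ 2)
    have hterm : (fun n : ℕ => (c : ℝ) / s ^ (n + 2)) = fun n => c / s ^ 2 * (s : ℝ)⁻¹ ^ n := by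
      funext n; rw [inv_pow, pow_add]; field_simp
    have hval : (c : ℝ) / (s * (s - 1)) = c / s ^ 2 * (1 - (s : ℝ)⁻¹)⁻¹ := by
      have : (s : ℝ) - 1 ≠ 0 := by linarith
      field_simp
    rwa [hterm, hval]
  exact (HasSum.zero_add (f := fun n => ((if n = 0 then x else c : ℕ) : ℝ) / (s : ℝ) ^ (n + 1))
    (by simpa [pow_succ, pow_add, mul_assoc] using htail)).tsum_eq.trans (by simp)

theorem sval_two_ite_zero {k : ℕ} (hk : k ≤ 1) :
    sval 2 (fun n => if n = 0 then k else 1 - k) = 1 / 2 := by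
  rw [sval_ite_zero one_lt_two]
  interval_cases k <;> norm_num

theorem f_on_codes_of_binary_point_general (s : ℕ) (A1 : Finset ℕ)
    (a : ℕ) (ha1 : 1 ≤ a) (ha2 : a < s)
    (i j : ℕ) (hi : i = if a ∈ A1 then 1 else 0) (hj : j = if a - 1 ∈ A1 then 1 else 0) :
    betaSeq A1 (fun n => if n = 0 then a else 0) =
      (fun n => if n = 0 then i else 1 - i) ∧
    betaSeq A1 (fun n => if n = 0 then a - 1 else s - 1) =
      (fun n => if n = 0 then j else 1 - j) ∧
    sval 2 (fun n => if n = 0 then i else 1 - i) =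
      sval 2 (fun n => if n = 0 then j else 1 - j) := by
  have hi1 : i ≤ 1 := by split_ifs at hi <;> omega
  have hj1 : j ≤ 1 := by split_ifs at hj <;> omega
  subst hi hj
  refine ⟨betaSeq_ite_zero A1 (by omega), betaSeq_ite_zero A1 (by omega), ?_⟩
  rw [sval_two_ite_zero hi1, sval_two_ite_zero hj1]

/-- for a digit `1 ≤ a ≤ s−1`, the two `s`-adic codes `(a,0,0,…)` and
`(a−1,s−1,s−1,…)` of the point `a/s` are mapped by the digit recursion to the binary
codes with first digit `i = [a ∈ A₁]` (resp. `j = [a−1 ∈ A₁]`) followed by the constant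
digit `1−i` (resp. `1−j`), and both binary codes represent the same real number. -/
theorem f_on_codes_of_binary_point (s : ℕ) (hs : 2 < s) (A0 A1 : Finset ℕ)
    (hA : A0 ∪ A1 = Finset.range s) (hdisj : Disjoint A0 A1)
    (h0 : A0.Nonempty) (h1 : A1.Nonempty)
    (a : ℕ) (ha1 : 1 ≤ a) (ha2 : a < s)
    (i j : ℕ) (hi : i = if a ∈ A1 then 1 else 0) (hj : j = if a - 1 ∈ A1 then 1 else 0) :
    betaSeq A1 (fun n => if n = 0 then a else 0) =
      (fun n => if n = 0 then i else 1 - i) ∧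
    betaSeq A1 (fun n => if n = 0 then a - 1 else s - 1) =
      (fun n => if n = 0 then j else 1 - j) ∧
    sval 2 (fun n => if n = 0 then i else 1 - i) =
      sval 2 (fun n => if n = 0 then j else 1 - j) :=
  f_on_codes_of_binary_point_general s A1 a ha1 ha2 i j hi hj
end

section
/- On every s-adic cylinder Δ^s_{c₁…c_m} with 0 < c_m < s−1, the function f attains values f(x₀), f(x₁), f(x₂) at the three points x₀ = Δ_{c₁…c_m(0)}, x₁ = Δ_{c₁…c_{m−1}(c_m)}, x₂ = Δ_{c₁…c_m(s−1)} with x₀ < x₁ < x₂, such that either f(x₀) > f(x₁) < f(x₂) or f(x₀) < f(x₁) > f(x₂); hence f is not monotone on this cylinder. -/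
open Set Filter

lemma betaSeq_eventually_const (A1 : Finset ℕ) (α : ℕ → ℕ) (m0 : ℕ)
    (h : ∀ k, m0 ≤ k → α (k+1) = α k) :
    ∀ n, m0 ≤ n → betaSeq A1 α n = betaSeq A1 α m0 := by
  intro n hn
  induction n, hn using Nat.le_induction with
  | base => rfl
  | succ n hn ih => rw [betaSeq, if_pos (h n hn), ih]

lemma summable_digits (s : ℕ) (hs : 2 ≤ s) (α : ℕ → ℕ) (hα : ∀ n, α n < s) :
    Summable (fun n => (α n : ℝ) / (s : ℝ) ^ (n + 1)) := by
  have hs0 : (0:ℝ) < s := by exact_mod_cast Nat.pos_of_ne_zero (by omega)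
  refine Summable.of_nonneg_of_le (f := fun n => (1/(s:ℝ))^n) ?_ ?_ ?_
  · intro n; positivity
  · intro n
    have h1 : (α n : ℝ) ≤ s := by exact_mod_cast (hα n).le
    calc (α n : ℝ) / (s:ℝ)^(n+1) ≤ (s:ℝ) / (s:ℝ)^(n+1) := by gcongr
      _ = (1/(s:ℝ))^n := by
          rw [pow_succ, one_div, inv_pow]
          field_simp
  · apply summable_geometric_of_lt_one (by positivity)
    rw [div_lt_one hs0]
    exact_mod_cast hs

lemma sval_lt_sval (s : ℕ) (hs : 2 ≤ s) (α β : ℕ → ℕ) (hα : ∀ n, α n < s) (hβ : ∀ n, β n < s)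
    (hle : ∀ n, α n ≤ β n) (i : ℕ) (hi : α i < β i) : sval s α < sval s β := by
  have hs0 : (0:ℝ) < s := by exact_mod_cast Nat.pos_of_ne_zero (by omega)
  refine Summable.tsum_lt_tsum (i := i) (fun n => ?_) ?_ ?_ ?_
  · gcongr
    exact_mod_cast hle n
  · have hp : (0:ℝ) < (s:ℝ)^(i+1) := pow_pos hs0 _
    exact (div_lt_div_iff_of_pos_right hp).mpr (by exact_mod_cast hi)
  · exact summable_digits s hs α hα
  · exact summable_digits s hs β hβ

/-- on a cylinder `Δˢ_{c₁…c_m}` with `0 < c_m < s−1`, the three points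
`x₀ = Δ_{c₁…c_m(0)} < x₁ = Δ_{c₁…c_{m−1}(c_m)} < x₂ = Δ_{c₁…c_m(s−1)}` satisfy either
`f(x₀) > f(x₁) < f(x₂)` or `f(x₀) < f(x₁) > f(x₂)`; hence `f` is not monotone on the
cylinder. -/
theorem f_not_monotone_on_cylinder (s : ℕ) (hs : 2 < s) (A0 A1 : Finset ℕ)
    (hA : A0 ∪ A1 = Finset.range s) (hdisj : Disjoint A0 A1)
    (h0 : A0.Nonempty) (h1 : A1.Nonempty) (f : ℝ → ℝ)
    (hf : ∀ α : ℕ → ℕ, isDigits s α → f (sval s α) = sval 2 (betaSeq A1 α))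
    (m : ℕ) (hm : 1 ≤ m) (c : ℕ → ℕ) (hc : ∀ i < m, c i < s)
    (hcm0 : 0 < c (m - 1)) (hcm1 : c (m - 1) < s - 1)
    (x₀ x₁ x₂ : ℝ)
    (hx₀ : x₀ = sval s (fun n => if n < m then c n else 0))
    (hx₁ : x₁ = sval s (fun n => if n < m then c n else c (m - 1)))
    (hx₂ : x₂ = sval s (fun n => if n < m then c n else s - 1)) :
    x₀ < x₁ ∧ x₁ < x₂ ∧
    ((f x₁ < f x₀ ∧ f x₁ < f x₂) ∨ (f x₀ < f x₁ ∧ f x₂ < f x₁)) ∧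
    ¬ MonotoneOn f (cylinder s m c) ∧ ¬ AntitoneOn f (cylinder s m c) := by
  obtain ⟨k, rfl⟩ : ∃ k, m = k + 1 := ⟨m - 1, by omega⟩
  simp only [Nat.add_sub_cancel] at hcm0 hcm1 hx₁
  set α₀ : ℕ → ℕ := fun n => if n < k + 1 then c n else 0 with hA0def
  set α₁ : ℕ → ℕ := fun n => if n < k + 1 then c n else c k with hA1def
  set α₂ : ℕ → ℕ := fun n => if n < k + 1 then c n else s - 1 with hA2def
  have hck : c k < s := hc k (by omega)
  have hdig₀ : isDigits s α₀ := by
    intro n; simp only [hA0def]; split_ifs with h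
    · exact hc n h
    · omega
  have hdig₁ : isDigits s α₁ := by
    intro n; simp only [hA1def]; split_ifs with h
    · exact hc n h
    · exact hck
  have hdig₂ : isDigits s α₂ := by
    intro n; simp only [hA2def]; split_ifs with h
    · exact hc n h
    · omega
  have hdigβ : ∀ γ : ℕ → ℕ, ∀ n, betaSeq A1 γ n < 2 :=
    fun γ n => Nat.lt_succ_of_le (betaSeq_le_one A1 γ n)
  have h01 : x₀ < x₁ := by
    rw [hx₀, hx₁]
    refine sval_lt_sval s (by omega) α₀ α₁ hdig₀ hdig₁ ?_ (k+1) ?_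
    · intro n; simp only [hA0def, hA1def]; split_ifs <;> omega
    · simp only [hA0def, hA1def]; split_ifs <;> omega
  have h12 : x₁ < x₂ := by
    rw [hx₁, hx₂]
    refine sval_lt_sval s (by omega) α₁ α₂ hdig₁ hdig₂ ?_ (k+1) ?_
    · intro n; simp only [hA1def, hA2def]; split_ifs <;> omega
    · simp only [hA1def, hA2def]; split_ifs <;> omega
  -- beta sequence facts
  have hagree0 : ∀ n ≤ k, betaSeq A1 α₀ n = betaSeq A1 α₁ n := by
    intro n hn
    apply betaSeq_congr
    intro i hi
    simp only [hA0def, hA1def, if_pos (show i < k + 1 by omega)]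
  have hagree2 : ∀ n ≤ k, betaSeq A1 α₂ n = betaSeq A1 α₁ n := by
    intro n hn
    apply betaSeq_congr
    intro i hi
    simp only [hA2def, hA1def, if_pos (show i < k + 1 by omega)]
  have h1c : ∀ n, k ≤ n → betaSeq A1 α₁ n = betaSeq A1 α₁ k := by
    apply betaSeq_eventually_const
    intro j hj
    simp only [hA1def, if_neg (show ¬ (j + 1 < k + 1) by omega)]
    split_ifs with h
    · have : j = k := by omega
      rw [this]
    · rfl
  have e0 : α₀ (k+1) = 0 := by
    simp only [hA0def, if_neg (show ¬ (k + 1 < k + 1) by omega)]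
  have e0' : α₀ k = c k := by
    simp only [hA0def, if_pos (show k < k + 1 by omega)]
  have h0top : betaSeq A1 α₀ (k+1) = 1 - betaSeq A1 α₁ k := by
    rw [betaSeq, e0, e0', if_neg (by omega), hagree0 k le_rfl]
  have h0c : ∀ n, k + 1 ≤ n → betaSeq A1 α₀ n = 1 - betaSeq A1 α₁ k := by
    intro n hn
    rw [betaSeq_eventually_const A1 α₀ (k+1) ?_ n hn, h0top]
    intro j hj
    simp only [hA0def, if_neg (show ¬ (j + 1 < k + 1) by omega),
      if_neg (show ¬ (j < k + 1) by omega)]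
  have e2 : α₂ (k+1) = s - 1 := by
    simp only [hA2def, if_neg (show ¬ (k + 1 < k + 1) by omega)]
  have e2' : α₂ k = c k := by
    simp only [hA2def, if_pos (show k < k + 1 by omega)]
  have h2top : betaSeq A1 α₂ (k+1) = 1 - betaSeq A1 α₁ k := by
    rw [betaSeq, e2, e2', if_neg (by omega), hagree2 k le_rfl]
  have h2c : ∀ n, k + 1 ≤ n → betaSeq A1 α₂ n = 1 - betaSeq A1 α₁ k := by
    intro n hn
    rw [betaSeq_eventually_const A1 α₂ (k+1) ?_ n hn, h2top]
    intro j hj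
    simp only [hA2def, if_neg (show ¬ (j + 1 < k + 1) by omega),
      if_neg (show ¬ (j < k + 1) by omega)]
  have hble : betaSeq A1 α₁ k ≤ 1 := betaSeq_le_one A1 α₁ k
  -- f values
  have hf₀ : f x₀ = sval 2 (betaSeq A1 α₀) := by rw [hx₀]; exact hf α₀ hdig₀
  have hf₁ : f x₁ = sval 2 (betaSeq A1 α₁) := by rw [hx₁]; exact hf α₁ hdig₁
  have hf₂ : f x₂ = sval 2 (betaSeq A1 α₂) := by rw [hx₂]; exact hf α₂ hdig₂
  have key : ∀ γ : ℕ → ℕ, (∀ n ≤ k, betaSeq A1 γ n = betaSeq A1 α₁ n) →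
      (∀ n, k + 1 ≤ n → betaSeq A1 γ n = 1 - betaSeq A1 α₁ k) →
      (betaSeq A1 α₁ k = 0 → sval 2 (betaSeq A1 α₁) < sval 2 (betaSeq A1 γ)) ∧
      (betaSeq A1 α₁ k = 1 → sval 2 (betaSeq A1 γ) < sval 2 (betaSeq A1 α₁)) := by
    intro γ hag htail
    constructor
    · intro hb
      refine sval_lt_sval 2 le_rfl _ _ (hdigβ α₁) (hdigβ γ) ?_ (k+1) ?_
      · intro n
        rcases le_or_gt n k with h | h
        · rw [hag n h]
        · rw [htail n h, h1c n (by omega)]; omega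
      · rw [htail (k+1) le_rfl, h1c (k+1) (by omega)]; omega
    · intro hb
      refine sval_lt_sval 2 le_rfl _ _ (hdigβ γ) (hdigβ α₁) ?_ (k+1) ?_
      · intro n
        rcases le_or_gt n k with h | h
        · rw [hag n h]
        · rw [htail n h, h1c n (by omega)]; omega
      · rw [htail (k+1) le_rfl, h1c (k+1) (by omega)]; omega
  obtain ⟨k0, k0'⟩ := key α₀ hagree0 h0c
  obtain ⟨k2, k2'⟩ := key α₂ hagree2 h2c
  have hOr : (f x₁ < f x₀ ∧ f x₁ < f x₂) ∨ (f x₀ < f x₁ ∧ f x₂ < f x₁) := by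
    rw [hf₀, hf₁, hf₂]
    rcases (show betaSeq A1 α₁ k = 0 ∨ betaSeq A1 α₁ k = 1 by omega) with hb | hb
    · exact Or.inl ⟨k0 hb, k2 hb⟩
    · exact Or.inr ⟨k0' hb, k2' hb⟩
  have mem₀ : x₀ ∈ cylinder s (k+1) c :=
    ⟨α₀, hdig₀, fun i hi => by simp only [hA0def, if_pos hi], hx₀⟩
  have mem₁ : x₁ ∈ cylinder s (k+1) c :=
    ⟨α₁, hdig₁, fun i hi => by simp only [hA1def, if_pos hi], hx₁⟩
  have mem₂ : x₂ ∈ cylinder s (k+1) c :=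
    ⟨α₂, hdig₂, fun i hi => by simp only [hA2def, if_pos hi], hx₂⟩
  refine ⟨h01, h12, hOr, ?_, ?_⟩
  · intro hmon
    rcases hOr with ⟨h, h'⟩ | ⟨h, h'⟩
    · exact absurd (hmon mem₀ mem₁ h01.le) (by linarith)
    · exact absurd (hmon mem₁ mem₂ h12.le) (by linarith)
  · intro hant
    rcases hOr with ⟨h, h'⟩ | ⟨h, h'⟩
    · exact absurd (hant mem₁ mem₂ h12.le) (by linarith)
    · exact absurd (hant mem₀ mem₁ h01.le) (by linarith)
end
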